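/- arXiv:2411.05366 — 3 statements merged into one kernel-verified Lean document; each statement's English description precedes it below -/
import Mathlib

section
/- Let p be a prime and f ∈ ℤ[x,y] a polynomial with integer coefficients and nonzero constant term. Let C_p = {(x,y) ∈ {0,1,…,p−1}² : p ∣ f(x,y)} and m = |C_p|, and assume that every (x,y) ∈ C_p satisfies p ∤ f_x(x,y). Then the cardinality of S = {(x,y) ∈ {0,1,…,p²−1}² : p ∣ f(x,y) and p² ∤ f(x,y)} equals m·p(p−1). -/
/-!
Every point of `{0,…,p²-1}²` is uniquely `c + p a` with `c, a ∈ {0,…,p-1}²`. First-order Taylor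
expansion gives `f(c + p a) ≡ f(c) + p (a₁ f_x(c) + a₂ f_y(c)) (mod p²)`, so `p ∣ f(c + p a)` iff
`c ∈ C_p`, and then, writing `f(c) = p k`, `p² ∤ f(c + p a)` iff
`k + a₁ f_x(c) + a₂ f_y(c) ≢ 0 (mod p)`. As `p ∤ f_x(c)`, for each `a₂` exactly one residue `a₁`
fails this, so each `c ∈ C_p` has `p (p - 1)` lifts in `S`.
-/

open Finset MvPolynomial

namespace MvPolynomial

variable {R σ : Type*} [CommRing R] [Fintype σ]

theorem sq_dvd_eval_add_smul_sub (f : MvPolynomial σ R) (x a : σ → R) (ε : R) :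
    ε ^ 2 ∣ eval (x + ε • a) f - (eval x f + ε * ∑ i, a i * eval x (pderiv i f)) := by
  classical
  induction f using MvPolynomial.induction_on with
  | C c => simp
  | add f g hf hg =>
    convert dvd_add hf hg using 1
    simp only [map_add, mul_add, sum_add_distrib]
    ring
  | mul_X f n hf =>
    obtain ⟨r, hr⟩ := hf
    have hsingle : ∑ i, a i * (eval x f * eval x ((Pi.single i 1 : σ → MvPolynomial σ R) n)) =
        a n * eval x f := by
      simp [Pi.single_apply, apply_ite (eval x)]
    simp only [Derivation.leibniz, pderiv_X, map_add, map_mul, smul_eq_mul, eval_X, Pi.add_apply,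
      Pi.smul_apply, mul_add, sum_add_distrib, hsingle, ← mul_sum, mul_left_comm _ (x n)]
    exact ⟨r * x n + ε * r * a n + a n * ∑ i, a i * eval x (pderiv i f),
      by linear_combination (x n + ε * a n) * hr⟩

theorem dvd_eval_add_smul_iff (f : MvPolynomial σ R) (x a : σ → R) (ε : R) :
    ε ∣ eval (x + ε • a) f ↔ ε ∣ eval x f := by
  obtain ⟨r, hr⟩ := sq_dvd_eval_add_smul_sub f x a ε
  rw [show eval (x + ε • a) f = eval x f + ε * (∑ i, a i * eval x (pderiv i f) + ε * r) by
    linear_combination hr, dvd_add_left (dvd_mul_right _ _)]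

theorem sq_dvd_eval_add_smul_iff [IsDomain R] (f : MvPolynomial σ R) (x a : σ → R) {ε k : R}
    (hε : ε ≠ 0) (hk : eval x f = ε * k) :
    ε ^ 2 ∣ eval (x + ε • a) f ↔ ε ∣ k + ∑ i, a i * eval x (pderiv i f) := by
  obtain ⟨r, hr⟩ := sq_dvd_eval_add_smul_sub f x a ε
  rw [show eval (x + ε • a) f = ε * (k + ∑ i, a i * eval x (pderiv i f) + ε * r) by
    linear_combination hr + hk, sq, mul_dvd_mul_iff_left hε, dvd_add_left (dvd_mul_right _ _)]

end MvPolynomial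

theorem card_filter_range_eq_card_filter_zmod (n : ℕ) [NeZero n] (P : ZMod n → Prop)
    [DecidablePred P] : #{a ∈ range n | P ((a : ℕ) : ZMod n)} = #{z : ZMod n | P z} := by
  refine card_nbij' (fun a => (a : ZMod n)) ZMod.val ?_ ?_ ?_ ?_
  · intro a ha; simp_all
  · intro z hz; simp_all [ZMod.val_lt]
  · intro a ha; simp_all [Nat.mod_eq_of_lt]
  · intro z _; simp

theorem card_filter_range_dvd_add_mul {p : ℕ} (hp : p.Prime) (w u : ℤ) (hu : ¬ (p : ℤ) ∣ u) :
    #{a ∈ range p | (p : ℤ) ∣ w + ((a : ℕ) : ℤ) * u} = 1 := by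
  have := Fact.mk hp
  have hu' : (u : ZMod p) ≠ 0 := by rwa [Ne, ZMod.intCast_zmod_eq_zero_iff_dvd]
  have hsol : ∀ z : ZMod p, (w : ZMod p) + z * u = 0 ↔ z = -w / u := by
    intro z; rw [eq_div_iff hu', ← add_eq_zero_iff_eq_neg', add_comm]
  simp_rw [← ZMod.intCast_zmod_eq_zero_iff_dvd]
  push_cast
  rw [card_filter_range_eq_card_filter_zmod p (fun z : ZMod p => (w : ZMod p) + z * u = 0)]
  simp only [hsol, filter_eq', mem_univ, if_true, card_singleton]

theorem card_filter_not_dvd_add_linear {p : ℕ} (hp : p.Prime) (k u v : ℤ) (hu : ¬ (p : ℤ) ∣ u) :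
    #{a ∈ range p ×ˢ range p | ¬ (p : ℤ) ∣ k + (a.1 * u + a.2 * v)} = p * (p - 1) := by
  have hdvd : #{a ∈ range p ×ˢ range p | (p : ℤ) ∣ k + (a.1 * u + a.2 * v)} = p := by
    rw [card_filter, sum_product_right]
    simp_rw [← card_filter]
    calc ∑ b ∈ range p, #{a ∈ range p | (p : ℤ) ∣ k + (((a : ℕ) : ℤ) * u + b * v)}
        = ∑ b ∈ range p, #{a ∈ range p | (p : ℤ) ∣ (k + b * v) + ((a : ℕ) : ℤ) * u} := by
          simp_rw [add_assoc, add_comm (_ * u)]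
      _ = p := by simp [card_filter_range_dvd_add_mul hp _ _ hu]
  rw [filter_not, card_sdiff_of_subset (filter_subset _ _), hdvd, card_product, card_range,
    Nat.mul_sub, mul_one]

theorem card_filter_range_sq_prod {n : ℕ} (hn : 0 < n) (P : ℕ × ℕ → Prop) [DecidablePred P] :
    #{xy ∈ range (n ^ 2) ×ˢ range (n ^ 2) | P xy} =
      ∑ c ∈ range n ×ˢ range n, #{a ∈ range n ×ˢ range n | P (c.1 + n * a.1, c.2 + n * a.2)} := by
  have hlt {c a : ℕ} (hc : c < n) (ha : a < n) : c + n * a < n ^ 2 := by nlinarith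
  simp only [card_filter]
  rw [← sum_product', ← card_filter, ← card_filter]
  refine card_nbij' (fun xy => ((xy.1 % n, xy.2 % n), (xy.1 / n, xy.2 / n)))
    (fun q => (q.1.1 + n * q.2.1, q.1.2 + n * q.2.2)) ?_ ?_ ?_ ?_
  · rintro ⟨x, y⟩
    simp (disch := omega) [sq, Nat.mod_lt _ hn, Nat.div_lt_iff_lt_mul hn, Nat.mod_add_div]
  · rintro ⟨⟨c, d⟩, ⟨a, b⟩⟩
    simp only [coe_filter, mem_product, mem_range]
    exact fun ⟨⟨⟨hc, hd⟩, ha, hb⟩, h⟩ => ⟨⟨hlt hc ha, hlt hd hb⟩, h⟩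
  · rintro ⟨x, y⟩ -
    simp [Nat.mod_add_div]
  · rintro ⟨⟨c, d⟩, ⟨a, b⟩⟩
    simp only [coe_filter, mem_product, mem_range]
    rintro ⟨⟨⟨hc, hd⟩, -⟩, -⟩
    simp [Nat.add_mul_div_left _ _ hn, Nat.mod_eq_of_lt, Nat.div_eq_of_lt, hc, hd]

theorem natCast_vec_add_mul (n : ℕ) (c a : ℕ × ℕ) :
    ![((c.1 + n * a.1 : ℕ) : ℤ), ((c.2 + n * a.2 : ℕ) : ℤ)] =
      ![(c.1 : ℤ), (c.2 : ℤ)] + (n : ℤ) • ![(a.1 : ℤ), (a.2 : ℤ)] := by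
  ext i; fin_cases i <;> simp

section Lifts

variable (f : MvPolynomial (Fin 2) ℤ)

theorem dvd_eval_lift_iff {n : ℕ} (c a : ℕ × ℕ) :
    (n : ℤ) ∣ eval ![((c.1 + n * a.1 : ℕ) : ℤ), ((c.2 + n * a.2 : ℕ) : ℤ)] f ↔
      (n : ℤ) ∣ eval ![(c.1 : ℤ), (c.2 : ℤ)] f := by
  rw [natCast_vec_add_mul, dvd_eval_add_smul_iff]

theorem exactly_dvd_eval_lift_iff {n : ℕ} (c a : ℕ × ℕ) (hn : n ≠ 0) {k : ℤ}
    (hk : eval ![(c.1 : ℤ), (c.2 : ℤ)] f = n * k) :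
    ((n : ℤ) ∣ eval ![((c.1 + n * a.1 : ℕ) : ℤ), ((c.2 + n * a.2 : ℕ) : ℤ)] f ∧
      ¬ (n : ℤ) ^ 2 ∣ eval ![((c.1 + n * a.1 : ℕ) : ℤ), ((c.2 + n * a.2 : ℕ) : ℤ)] f) ↔
      ¬ (n : ℤ) ∣ k + (a.1 * eval ![(c.1 : ℤ), (c.2 : ℤ)] (pderiv 0 f) +
        a.2 * eval ![(c.1 : ℤ), (c.2 : ℤ)] (pderiv 1 f)) := by
  rw [dvd_eval_lift_iff, natCast_vec_add_mul,
    sq_dvd_eval_add_smul_iff f _ _ (by exact_mod_cast hn) hk, Fin.sum_univ_two, hk]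
  simp

theorem card_exactly_dvd_lifts {p : ℕ} (hp : p.Prime) (c : ℕ × ℕ)
    (hfx : (p : ℤ) ∣ eval ![(c.1 : ℤ), (c.2 : ℤ)] f →
      ¬ (p : ℤ) ∣ eval ![(c.1 : ℤ), (c.2 : ℤ)] (pderiv 0 f)) :
    #{a ∈ range p ×ˢ range p |
        (p : ℤ) ∣ eval ![((c.1 + p * a.1 : ℕ) : ℤ), ((c.2 + p * a.2 : ℕ) : ℤ)] f ∧
        ¬ (p : ℤ) ^ 2 ∣ eval ![((c.1 + p * a.1 : ℕ) : ℤ), ((c.2 + p * a.2 : ℕ) : ℤ)] f} =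
      if (p : ℤ) ∣ eval ![(c.1 : ℤ), (c.2 : ℤ)] f then p * (p - 1) else 0 := by
  split_ifs with hc
  · obtain ⟨k, hk⟩ := hc
    rw [filter_congr fun a _ => exactly_dvd_eval_lift_iff f c a hp.ne_zero hk]
    exact card_filter_not_dvd_add_linear hp k _ _ (hfx ⟨k, hk⟩)
  · exact card_eq_zero.2 <| filter_eq_empty_iff.2 fun a _ h =>
      hc ((dvd_eval_lift_iff f c a).1 h.1)

end Lifts

theorem stmt_2_general (p : ℕ) (hp : p.Prime) (f : MvPolynomial (Fin 2) ℤ)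
    (Cp : Finset (ℕ × ℕ))
    (hCp : Cp = (Finset.range p ×ˢ Finset.range p).filter (fun xy : ℕ × ℕ =>
      (p : ℤ) ∣ MvPolynomial.eval ![(xy.1 : ℤ), (xy.2 : ℤ)] f))
    (m : ℕ) (hm : m = Cp.card)
    (hfx : ∀ xy ∈ Cp,
      ¬ (p : ℤ) ∣ MvPolynomial.eval ![(xy.1 : ℤ), (xy.2 : ℤ)] (MvPolynomial.pderiv 0 f)) :
    ((Finset.range (p ^ 2) ×ˢ Finset.range (p ^ 2)).filter (fun xy : ℕ × ℕ =>
        (p : ℤ) ∣ MvPolynomial.eval ![(xy.1 : ℤ), (xy.2 : ℤ)] f ∧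
        ¬ ((p : ℤ) ^ 2 ∣ MvPolynomial.eval ![(xy.1 : ℤ), (xy.2 : ℤ)] f))).card
      = m * (p * (p - 1)) := by
  rw [card_filter_range_sq_prod hp.pos,
    sum_congr rfl fun c hc => card_exactly_dvd_lifts f hp c fun hdvd =>
      hfx c (hCp ▸ mem_filter.2 ⟨hc, hdvd⟩),
    sum_ite, sum_const_zero, add_zero, sum_const, smul_eq_mul, ← hCp, hm]

theorem stmt_2 (p : ℕ) (hp : p.Prime) (f : MvPolynomial (Fin 2) ℤ)
    (hconst : MvPolynomial.coeff 0 f ≠ 0)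
    (Cp : Finset (ℕ × ℕ))
    (hCp : Cp = (Finset.range p ×ˢ Finset.range p).filter (fun xy : ℕ × ℕ =>
      (p : ℤ) ∣ MvPolynomial.eval ![(xy.1 : ℤ), (xy.2 : ℤ)] f))
    (m : ℕ) (hm : m = Cp.card)
    (hfx : ∀ xy ∈ Cp,
      ¬ (p : ℤ) ∣ MvPolynomial.eval ![(xy.1 : ℤ), (xy.2 : ℤ)] (MvPolynomial.pderiv 0 f)) :
    ((Finset.range (p ^ 2) ×ˢ Finset.range (p ^ 2)).filter (fun xy : ℕ × ℕ =>
        (p : ℤ) ∣ MvPolynomial.eval ![(xy.1 : ℤ), (xy.2 : ℤ)] f ∧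
        ¬ ((p : ℤ) ^ 2 ∣ MvPolynomial.eval ![(xy.1 : ℤ), (xy.2 : ℤ)] f))).card
      = m * (p * (p - 1)) :=
  stmt_2_general p hp f Cp hCp m hm hfx
end

section
/- Let p be a prime, f ∈ ℤ[x,y] a polynomial with integer coefficients and nonzero constant term, and (r₁,s₁), (r₂,s₂) integer points with p ∣ f(r₁,s₁) and p ∣ f(r₂,s₂). Assume f_x(r₁,s₁)·f_y(r₂,s₂) − f_y(r₁,s₁)·f_x(r₂,s₂) ≢ 0 (mod p). Then the number of pairs (k,l) ∈ {0,1,…,p−1}² such that both f(r₁+kp, s₁+lp) and f(r₂+kp, s₂+lp) are divisible by p but not by p² equals (p−1)². -/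
/-!
By first-order Taylor expansion, `f(r + kp, s + lp) ≡ f(r, s) + p (k f_x(r, s) + l f_y(r, s))`
modulo `p²`. So when `p ∣ f(r, s) = p c`, the value at `(r + kp, s + lp)` is divisible by `p`
exactly once iff `c + k f_x(r, s) + l f_y(r, s) ≢ 0 (mod p)`. For the two base points this is
the non-vanishing of two affine forms in `(k, l) ∈ 𝔽_p²` whose linear parts are independent, so
`(k, l)` ↦ the pair of their values is a bijection of `𝔽_p²` and exactly `(p - 1)²` points
avoid both zero sets.
-/

open MvPolynomial Finset

theorem sq_dvd_eval_add_smul_sub_taylor {R σ : Type*} [CommRing R] [Fintype σ]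
    (f : MvPolynomial σ R) (x h : σ → R) (a : R) :
    a ^ 2 ∣ eval (x + a • h) f - (eval x f + a * ∑ i, h i * eval x (pderiv i f)) := by
  induction f using MvPolynomial.induction_on with
  | C b => simp
  | add f g hf hg =>
    obtain ⟨M, hM⟩ := hf
    obtain ⟨N, hN⟩ := hg
    exact ⟨M + N, by
      simp only [map_add, mul_add, sum_add_distrib]
      linear_combination hM + hN⟩
  | mul_X f j hf =>
    obtain ⟨M, hM⟩ := hf
    have hsum : ∑ i, h i * eval x (pderiv i (f * X j)) =
        x j * ∑ i, h i * eval x (pderiv i f) + h j * eval x f := by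
      classical
      simp only [Derivation.leibniz, pderiv_X, Pi.single_apply, smul_eq_mul, map_add, map_mul,
        eval_X, apply_ite (eval x), map_zero, mul_ite, mul_one, mul_zero, mul_add,
        sum_add_distrib, sum_ite_eq, mem_univ, if_true, mul_sum, mul_left_comm (h _) (x j)]
      exact add_comm _ _
    refine ⟨M * (x j + a * h j) + h j * ∑ i, h i * eval x (pderiv i f), ?_⟩
    simp only [map_mul, eval_X, hsum, Pi.add_apply, Pi.smul_apply, smul_eq_mul]
    linear_combination (x j + a * h j) * hM

theorem dvd_and_not_sq_dvd_iff {R : Type*} [CommRing R] [IsDomain R] {a y b : R} (ha : a ≠ 0)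
    (h : a ^ 2 ∣ y - a * b) : (a ∣ y ∧ ¬ a ^ 2 ∣ y) ↔ ¬ a ∣ b := by
  have hy : a ^ 2 ∣ y ↔ a ∣ b := by
    rw [dvd_iff_dvd_of_dvd_sub h, pow_two, mul_dvd_mul_iff_left ha]
  have hdvd : a ∣ y := by
    rw [dvd_iff_dvd_of_dvd_sub (dvd_trans (dvd_pow_self a two_ne_zero) h)]
    exact dvd_mul_right a b
  tauto

theorem card_filter_affine_ne_zero {F : Type*} [Field F] [Fintype F] [DecidableEq F]
    (a₁ b₁ c₁ a₂ b₂ c₂ : F) (hdet : a₁ * b₂ - b₁ * a₂ ≠ 0) :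
    #{v : F × F | c₁ + v.1 * a₁ + v.2 * b₁ ≠ 0 ∧ c₂ + v.1 * a₂ + v.2 * b₂ ≠ 0}
      = (Fintype.card F - 1) ^ 2 := by
  set g : F × F → F × F := fun v =>
    (c₁ + v.1 * a₁ + v.2 * b₁, c₂ + v.1 * a₂ + v.2 * b₂)
  have hg : Function.Injective g := by
    rintro ⟨u, v⟩ ⟨u', v'⟩ huv
    simp only [g, Prod.mk.injEq] at huv
    obtain ⟨h₁, h₂⟩ := huv
    have hu : (u - u') * (a₁ * b₂ - b₁ * a₂) = 0 := by
      linear_combination b₂ * h₁ - b₁ * h₂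
    have hv : (v - v') * (a₁ * b₂ - b₁ * a₂) = 0 := by
      linear_combination a₁ * h₂ - a₂ * h₁
    simp only [mul_eq_zero, hdet, or_false, sub_eq_zero] at hu hv
    rw [hu, hv]
  have hcard :
      #{v : F × F | (g v).1 ≠ 0 ∧ (g v).2 ≠ 0} = #{w : F × F | w.1 ≠ 0 ∧ w.2 ≠ 0} :=
    card_bij (fun v _ => g v) (by simp) (fun v _ w _ h => hg h)
      (fun w hw => by
        obtain ⟨v, rfl⟩ := (Finite.injective_iff_surjective.mp hg) w
        exact ⟨v, by simpa using hw, rfl⟩)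
  rw [hcard, ← univ_product_univ, filter_product (fun u : F => u ≠ 0) (fun u : F => u ≠ 0),
    card_product, filter_ne', card_erase_of_mem (mem_univ _), card_univ, sq]

theorem card_filter_range_product_range {n : ℕ} [NeZero n] (P : ZMod n × ZMod n → Prop)
    [DecidablePred P] :
    #{kl ∈ range n ×ˢ range n | P (kl.1, kl.2)} = #{v : ZMod n × ZMod n | P v} := by
  refine card_nbij' (fun kl => ((kl.1 : ZMod n), (kl.2 : ZMod n))) (fun v => (v.1.val, v.2.val))
    ?_ ?_ ?_ ?_
  · intro kl; simp
  · intro v hv; simp_all [ZMod.val_lt]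
  · rintro ⟨k, l⟩ hkl
    simp_all [Nat.mod_eq_of_lt]
  · intro v _; simp

theorem dvd_and_not_sq_dvd_eval_shift_iff {p : ℕ} [NeZero p] (f : MvPolynomial (Fin 2) ℤ)
    {r s c : ℤ} (hc : eval ![r, s] f = p * c) (k l : ℤ) :
    ((p : ℤ) ∣ eval ![r + k * p, s + l * p] f ∧
        ¬ (p : ℤ) ^ 2 ∣ eval ![r + k * p, s + l * p] f) ↔
      (c : ZMod p) + k * (eval ![r, s] (pderiv 0 f) : ℤ) + l * (eval ![r, s] (pderiv 1 f) : ℤ)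
        ≠ 0 := by
  have hshift : ![r + k * p, s + l * p] = ![r, s] + (p : ℤ) • ![k, l] := by
    ext i; fin_cases i <;> simp [mul_comm]
  have htaylor := sq_dvd_eval_add_smul_sub_taylor f ![r, s] ![k, l] (p : ℤ)
  rw [← hshift, hc, Fin.sum_univ_two, ← mul_add] at htaylor
  rw [dvd_and_not_sq_dvd_iff (by exact_mod_cast NeZero.ne p) htaylor,
    ← ZMod.intCast_zmod_eq_zero_iff_dvd]
  push_cast
  simp [add_assoc]

theorem stmt_3_general (p : ℕ) (hp : p.Prime) (f : MvPolynomial (Fin 2) ℤ)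
    (r₁ s₁ r₂ s₂ : ℤ)
    (h₁ : (p : ℤ) ∣ MvPolynomial.eval ![r₁, s₁] f)
    (h₂ : (p : ℤ) ∣ MvPolynomial.eval ![r₂, s₂] f)
    (hdet : ¬ (p : ℤ) ∣
      (MvPolynomial.eval ![r₁, s₁] (MvPolynomial.pderiv 0 f) *
        MvPolynomial.eval ![r₂, s₂] (MvPolynomial.pderiv 1 f) -
       MvPolynomial.eval ![r₁, s₁] (MvPolynomial.pderiv 1 f) *
        MvPolynomial.eval ![r₂, s₂] (MvPolynomial.pderiv 0 f))) :
    ((Finset.range p ×ˢ Finset.range p).filter (fun kl : ℕ × ℕ =>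
        ((p : ℤ) ∣ MvPolynomial.eval ![r₁ + (kl.1 : ℤ) * p, s₁ + (kl.2 : ℤ) * p] f ∧
          ¬ ((p : ℤ) ^ 2 ∣ MvPolynomial.eval ![r₁ + (kl.1 : ℤ) * p, s₁ + (kl.2 : ℤ) * p] f)) ∧
        ((p : ℤ) ∣ MvPolynomial.eval ![r₂ + (kl.1 : ℤ) * p, s₂ + (kl.2 : ℤ) * p] f ∧
          ¬ ((p : ℤ) ^ 2 ∣ MvPolynomial.eval ![r₂ + (kl.1 : ℤ) * p, s₂ + (kl.2 : ℤ) * p] f)))).card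
      = (p - 1) ^ 2 := by
  have := Fact.mk hp
  obtain ⟨c₁, hc₁⟩ := h₁
  obtain ⟨c₂, hc₂⟩ := h₂
  simp only [dvd_and_not_sq_dvd_eval_shift_iff f hc₁, dvd_and_not_sq_dvd_eval_shift_iff f hc₂,
    Int.cast_natCast]
  rw [card_filter_range_product_range fun v : ZMod p × ZMod p =>
      _ + v.1 * _ + v.2 * _ ≠ 0 ∧ _ + v.1 * _ + v.2 * _ ≠ 0,
    card_filter_affine_ne_zero, ZMod.card]
  rwa [← Int.cast_mul, ← Int.cast_mul, ← Int.cast_sub, Ne,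
    ZMod.intCast_zmod_eq_zero_iff_dvd]

theorem stmt_3 (p : ℕ) (hp : p.Prime) (f : MvPolynomial (Fin 2) ℤ)
    (hconst : MvPolynomial.coeff 0 f ≠ 0) (r₁ s₁ r₂ s₂ : ℤ)
    (h₁ : (p : ℤ) ∣ MvPolynomial.eval ![r₁, s₁] f)
    (h₂ : (p : ℤ) ∣ MvPolynomial.eval ![r₂, s₂] f)
    (hdet : ¬ (p : ℤ) ∣
      (MvPolynomial.eval ![r₁, s₁] (MvPolynomial.pderiv 0 f) *
        MvPolynomial.eval ![r₂, s₂] (MvPolynomial.pderiv 1 f) -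
       MvPolynomial.eval ![r₁, s₁] (MvPolynomial.pderiv 1 f) *
        MvPolynomial.eval ![r₂, s₂] (MvPolynomial.pderiv 0 f))) :
    ((Finset.range p ×ˢ Finset.range p).filter (fun kl : ℕ × ℕ =>
        ((p : ℤ) ∣ MvPolynomial.eval ![r₁ + (kl.1 : ℤ) * p, s₁ + (kl.2 : ℤ) * p] f ∧
          ¬ ((p : ℤ) ^ 2 ∣ MvPolynomial.eval ![r₁ + (kl.1 : ℤ) * p, s₁ + (kl.2 : ℤ) * p] f)) ∧
        ((p : ℤ) ∣ MvPolynomial.eval ![r₂ + (kl.1 : ℤ) * p, s₂ + (kl.2 : ℤ) * p] f ∧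
          ¬ ((p : ℤ) ^ 2 ∣ MvPolynomial.eval ![r₂ + (kl.1 : ℤ) * p, s₂ + (kl.2 : ℤ) * p] f)))).card
      = (p - 1) ^ 2 :=
  stmt_3_general p hp f r₁ s₁ r₂ s₂ h₁ h₂ hdet
end

section
/- Let f ∈ ℤ[x,y] be a polynomial with integer coefficients. Assume: (i) for all sufficiently large primes p, every (x,y) ∈ C_p satisfies (f_x(x,y), f_y(x,y)) ≢ (0,0) (mod p); (ii) m(p)/p → 1 as p → ∞ along primes; (iii) for every k ≥ 2, m_{k,2}(p)/p² → 1 as p → ∞ along primes; (iv) for every k ≥ 2, m_{k,1}(p)/p → 0 as p → ∞ along primes. For each prime p and (k,l) ∈ {0,1,…,p−1}², let X_p(k,l) be the number of pairs (i,j) ∈ {0,1,…,p−1}² with p² ∣ f(kp+i, lp+j). Then for every k ≥ 1, the k-th moment of X_p with respect to the uniform measure on {0,…,p−1}², namely (1/p²)·Σ_{(k',l')} X_p(k',l')^k, converges to Σ_{i=1}^{k} S(k,i) (the k-th moment of the Poisson distribution with parameter 1) as p → ∞ along primes. -/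
open Matrix Filter

/-- Stirling numbers of the second kind: `stirling2 n k` is the number of
partitions of an `n`-element set into `k` nonempty blocks. -/
def stirling2 : ℕ → ℕ → ℕ
  | 0, 0 => 1
  | 0, _ + 1 => 0
  | _ + 1, 0 => 0
  | n + 1, k + 1 => (k + 1) * stirling2 n (k + 1) + stirling2 n k

/-- The points `(x,y) ∈ {0,…,p-1}²` with `p ∣ f(x,y)`. -/
noncomputable def curvePts (f : MvPolynomial (Fin 2) ℤ) (p : ℕ) : Finset (ℕ × ℕ) :=
  (Finset.range p ×ˢ Finset.range p).filter (fun xy : ℕ × ℕ =>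
    (p : ℤ) ∣ MvPolynomial.eval ![(xy.1 : ℤ), (xy.2 : ℤ)] f)

/-- The `k × 3` matrix over `ZMod p` associated to a `k`-tuple of points, with `t`-th row
`(f_x(r_t,s_t), f_y(r_t,s_t), f(r_t,s_t)/p) mod p`. -/
noncomputable def Bmat (f : MvPolynomial (Fin 2) ℤ) (p k : ℕ) (P : Fin k → ℕ × ℕ) :
    Matrix (Fin k) (Fin 3) (ZMod p) :=
  Matrix.of fun t =>
    ![((MvPolynomial.eval ![((P t).1 : ℤ), ((P t).2 : ℤ)] (MvPolynomial.pderiv 0 f) : ℤ) : ZMod p),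
      ((MvPolynomial.eval ![((P t).1 : ℤ), ((P t).2 : ℤ)] (MvPolynomial.pderiv 1 f) : ℤ) : ZMod p),
      ((MvPolynomial.eval ![((P t).1 : ℤ), ((P t).2 : ℤ)] f / (p : ℤ)) : ZMod p)]

/-- `k`-tuples of pairwise distinct points of `curvePts f p`. -/
noncomputable def tuples (f : MvPolynomial (Fin 2) ℤ) (p k : ℕ) : Finset (Fin k → ℕ × ℕ) :=
  (Fintype.piFinset fun _ : Fin k => curvePts f p).filter Function.Injective

open Classical in
/-- `m_{k,1}`: the number of `k`-tuples of pairwise distinct points whose associated matrix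
has rank `1`. -/
noncomputable def mk1 (f : MvPolynomial (Fin 2) ℤ) (p k : ℕ) : ℕ :=
  ((tuples f p k).filter (fun P => (Bmat f p k P).rank = 1)).card

open Classical in
/-- `m_{k,2}`: the number of `k`-tuples of pairwise distinct points whose associated matrix
has rank `2` with linearly independent first two columns. -/
noncomputable def mk2 (f : MvPolynomial (Fin 2) ℤ) (p k : ℕ) : ℕ :=
  ((tuples f p k).filter (fun P => (Bmat f p k P).rank = 2 ∧
    LinearIndependent (ZMod p) ![(Bmat f p k P)ᵀ 0, (Bmat f p k P)ᵀ 1])).card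

/-- `X_p(k,l)`: the number of `(i,j) ∈ {0,…,p-1}²` with `p² ∣ f(kp+i, lp+j)`. -/
noncomputable def Xrv (f : MvPolynomial (Fin 2) ℤ) (p : ℕ) (kl : ℕ × ℕ) : ℕ :=
  ((Finset.range p ×ˢ Finset.range p).filter (fun ij : ℕ × ℕ =>
    (p : ℤ) ^ 2 ∣
      MvPolynomial.eval ![(kl.1 : ℤ) * p + (ij.1 : ℤ), (kl.2 : ℤ) * p + (ij.2 : ℤ)] f)).card

/-- The filter of "`p → ∞` along primes": cofinite sets of primes. -/
def primesFilter : Filter ℕ := Filter.atTop ⊓ Filter.principal {p : ℕ | p.Prime}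

/-!
Write a point of `{0, …, p² - 1}²` as `(kp + x, lp + y)` with `x, y, k, l < p`. By first-order
Taylor expansion, for `(x, y)` on the curve mod `p` one has `p² ∣ f(kp + x, lp + y)` iff
`k f_x + l f_y + f / p ≡ 0 (mod p)`, i.e. iff the corresponding row of `B` annihilates
`(k, l, 1)`. Hence the `i`-th factorial moment of `X_p` is `p⁻²` times the number of pairs of an
`i`-tuple `P` of distinct points of `C_p` and a solution `(k, l) ∈ 𝔽_p²` of
`B_i(P) (k, l, 1)ᵀ = 0`. No row of `B_i(P)` has vanishing gradient part, so there is exactly one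
solution when the first two columns are independent and span the third, at most `p` when `B_i(P)`
has rank one, and none otherwise.
The factorial moment is therefore `m(p) / p` for `i = 1` and lies between `m_{i,2} / p²` and
`m_{i,2} / p² + m_{i,1} / p` for `i ≥ 2`; in both cases it tends to `1`. Finally
`x^k = ∑ S(k, i) x(x-1)⋯(x-i+1)` turns the factorial moments into the moments.
-/

theorem stirling2_eq_stirlingSecond : stirling2 = Nat.stirlingSecond := by
  funext n k
  induction n generalizing k with
  | zero => cases k <;> rfl
  | succ n ih =>
    cases k with
    | zero => rfl
    | succ k => rw [stirling2, ih, ih, Nat.stirlingSecond_succ_succ]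

theorem Nat.mul_descFactorial (x i : ℕ) :
    x * x.descFactorial i = x.descFactorial (i + 1) + i * x.descFactorial i := by
  rcases le_or_gt i x with h | h
  · rw [Nat.descFactorial_succ, ← add_mul, Nat.sub_add_cancel h]
  · simp [Nat.descFactorial_eq_zero_iff_lt.2 h]

theorem Nat.pow_eq_sum_stirlingSecond_mul_descFactorial (n x : ℕ) :
    x ^ n = ∑ i ∈ Finset.range (n + 1), n.stirlingSecond i * x.descFactorial i := by
  induction n with
  | zero => simp
  | succ n ih =>
    have hshift : ∑ i ∈ Finset.range (n + 1), n.stirlingSecond i * (i * x.descFactorial i)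
        = ∑ i ∈ Finset.range (n + 1),
            n.stirlingSecond (i + 1) * ((i + 1) * x.descFactorial (i + 1)) := by
      rw [Finset.sum_range_succ', Finset.sum_range_succ,
        Nat.stirlingSecond_eq_zero_of_lt n.lt_succ_self]
      simp
    calc x ^ (n + 1)
        = ∑ i ∈ Finset.range (n + 1), (n.stirlingSecond i * x.descFactorial (i + 1)
            + n.stirlingSecond i * (i * x.descFactorial i)) := by
          rw [pow_succ', ih, Finset.mul_sum]
          refine Finset.sum_congr rfl fun i _ => ?_
          rw [mul_left_comm, Nat.mul_descFactorial, mul_add]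
      _ = ∑ i ∈ Finset.range (n + 1),
            (n + 1).stirlingSecond (i + 1) * x.descFactorial (i + 1) := by
          rw [Finset.sum_add_distrib, hshift, ← Finset.sum_add_distrib]
          refine Finset.sum_congr rfl fun i _ => ?_
          rw [Nat.stirlingSecond_succ_succ]
          ring
      _ = _ := by simp [Finset.sum_range_succ' _ (n + 1)]

theorem Nat.pow_eq_sum_Icc_stirlingSecond_mul_descFactorial {n : ℕ} (hn : n ≠ 0) (x : ℕ) :
    x ^ n = ∑ i ∈ Finset.Icc 1 n, n.stirlingSecond i * x.descFactorial i := by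
  rw [Nat.pow_eq_sum_stirlingSecond_mul_descFactorial]
  refine (Finset.sum_subset (fun i hi => ?_) fun i hi hi' => ?_).symm
  · simpa [Nat.lt_succ_iff] using (Finset.mem_Icc.1 hi).2
  · obtain rfl : i = 0 := by
      simp only [Finset.mem_range, Finset.mem_Icc, not_and, not_le] at hi hi'
      omega
    obtain ⟨m, rfl⟩ := Nat.exists_eq_succ_of_ne_zero hn
    simp

theorem Finset.descFactorial_card_eq_card_filter_injective {α : Type*} [DecidableEq α]
    (s : Finset α) (i : ℕ) :
    s.card.descFactorial i =
      ((Fintype.piFinset fun _ : Fin i => s).filter Function.Injective).card := by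
  let e : ((Fintype.piFinset fun _ : Fin i => s).filter Function.Injective) ≃ (Fin i ↪ s) :=
    { toFun := fun P =>
        ⟨fun t => ⟨P.1 t, Fintype.mem_piFinset.1 (Finset.mem_filter.1 P.2).1 t⟩,
          fun t t' h => (Finset.mem_filter.1 P.2).2 (congrArg Subtype.val h)⟩
      invFun := fun g => ⟨fun t => g t, Finset.mem_filter.2
        ⟨Fintype.mem_piFinset.2 fun t => (g t).2, fun t t' h => g.injective (Subtype.ext h)⟩⟩
      left_inv := fun _ => rfl
      right_inv := fun _ => rfl }
  rw [Finset.card_eq_of_equiv_fintype e, Fintype.card_embedding_eq, Fintype.card_coe,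
    Fintype.card_fin]

theorem finrank_span_pair_eq_two_iff {K V : Type*} [Field K] [AddCommGroup V] [Module K V]
    {x y : V} :
    (Set.range ![x, y]).finrank K = 2 ↔ LinearIndependent K ![x, y] := by
  simp [linearIndependent_iff_card_eq_finrank_span, eq_comm]

section AffineSolutions

open Matrix Submodule

variable {K ι : Type*} [Field K]

theorem mulVec_vec3_one (B : Matrix ι (Fin 3) K) (a b : K) :
    B *ᵥ ![a, b, 1] = a • Bᵀ 0 + b • Bᵀ 1 + Bᵀ 2 := by
  ext t
  simp [mulVec, dotProduct, Fin.sum_univ_three, mul_comm]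

variable [Fintype ι] [Fintype K] [DecidableEq K]

def affineSolutions (B : Matrix ι (Fin 3) K) : Finset (K × K) :=
  Finset.univ.filter fun w => B *ᵥ ![w.1, w.2, 1] = 0

theorem card_filter_linear_eq_zero {a b : K} (c : K) (hab : ¬(a = 0 ∧ b = 0)) :
    (Finset.univ.filter fun w : K × K => w.1 * a + w.2 * b + c = 0).card = Fintype.card K := by
  rw [← Finset.card_univ (α := K)]
  rcases eq_or_ne a 0 with rfl | ha
  · have hb : b ≠ 0 := fun hb => hab ⟨rfl, hb⟩
    refine Finset.card_bij' (fun w _ => w.1) (fun x _ => (x, -c / b)) ?_ ?_ ?_ ?_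
    · simp
    · intro x _
      simp only [Finset.mem_filter, Finset.mem_univ, true_and]
      field_simp
      ring
    · intro w hw
      simp only [Finset.mem_filter, Finset.mem_univ, true_and] at hw
      ext
      · rfl
      · exact ((eq_div_iff hb).2 (by linear_combination hw)).symm
    · simp
  · refine Finset.card_bij' (fun w _ => w.2) (fun y _ => ((-c - y * b) / a, y)) ?_ ?_ ?_ ?_
    · simp
    · intro y _
      simp only [Finset.mem_filter, Finset.mem_univ, true_and]
      field_simp
      ring
    · intro w hw
      simp only [Finset.mem_filter, Finset.mem_univ, true_and] at hw
      ext
      · exact ((eq_div_iff ha).2 (by linear_combination hw)).symm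
      · rfl
    · simp

theorem affineSolutions_subset_row (B : Matrix ι (Fin 3) K) (t : ι) :
    affineSolutions B ⊆
      Finset.univ.filter fun w : K × K => w.1 * B t 0 + w.2 * B t 1 + B t 2 = 0 := by
  intro w hw
  simp only [affineSolutions, Finset.mem_filter, Finset.mem_univ, true_and] at hw ⊢
  simpa [mulVec_vec3_one] using congrFun hw t

theorem card_affineSolutions_le_card {B : Matrix ι (Fin 3) K} {t : ι}
    (ht : ¬(B t 0 = 0 ∧ B t 1 = 0)) :
    (affineSolutions B).card ≤ Fintype.card K :=
  card_filter_linear_eq_zero (B t 2) ht ▸ Finset.card_le_card (affineSolutions_subset_row B t)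

theorem card_affineSolutions_of_subsingleton [Subsingleton ι] {B : Matrix ι (Fin 3) K} {t : ι}
    (ht : ¬(B t 0 = 0 ∧ B t 1 = 0)) :
    (affineSolutions B).card = Fintype.card K := by
  refine card_filter_linear_eq_zero (B t 2) ht ▸ congrArg Finset.card ?_
  refine (affineSolutions_subset_row B t).antisymm fun w hw => ?_
  simp only [affineSolutions, Finset.mem_filter, Finset.mem_univ, true_and] at hw ⊢
  ext s
  rw [Subsingleton.elim s t]
  simpa [mulVec_vec3_one] using hw

theorem mem_affineSolutions_iff {B : Matrix ι (Fin 3) K} {w : K × K} :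
    w ∈ affineSolutions B ↔ w.1 • Bᵀ 0 + w.2 • Bᵀ 1 + Bᵀ 2 = 0 := by
  simp [affineSolutions, mulVec_vec3_one]

theorem rank_eq_finrank_span_of_mem_affineSolutions {B : Matrix ι (Fin 3) K} {w : K × K}
    (hw : w ∈ affineSolutions B) :
    B.rank = (Set.range ![Bᵀ 0, Bᵀ 1]).finrank K := by
  have hlast : Bᵀ 2 = -w.1 • Bᵀ 0 - w.2 • Bᵀ 1 := by
    rw [mem_affineSolutions_iff] at hw
    rw [neg_smul, ← sub_eq_zero, ← hw]
    abel
  have hspan : span K (Set.range B.col) = span K (Set.range ![Bᵀ 0, Bᵀ 1]) := by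
    refine le_antisymm (span_le.2 ?_) (span_mono ?_)
    · rintro _ ⟨j, rfl⟩
      fin_cases j
      · exact subset_span ⟨0, rfl⟩
      · exact subset_span ⟨1, rfl⟩
      · change Bᵀ 2 ∈ _
        rw [hlast]
        exact sub_mem (smul_mem _ _ (subset_span ⟨0, rfl⟩))
          (smul_mem _ _ (subset_span ⟨1, rfl⟩))
    · rintro _ ⟨j, rfl⟩
      fin_cases j
      exacts [⟨0, rfl⟩, ⟨1, rfl⟩]
  rw [rank_eq_finrank_span_cols, hspan]
  rfl

theorem rank_eq_two_or_eq_one_of_mem_affineSolutions {B : Matrix ι (Fin 3) K} {w : K × K}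
    (hw : w ∈ affineSolutions B) {t : ι} (ht : ¬(B t 0 = 0 ∧ B t 1 = 0)) :
    (B.rank = 2 ∧ LinearIndependent K ![Bᵀ 0, Bᵀ 1]) ∨ B.rank = 1 := by
  rw [rank_eq_finrank_span_of_mem_affineSolutions hw]
  by_cases hind : LinearIndependent K ![Bᵀ 0, Bᵀ 1]
  · exact .inl ⟨finrank_span_pair_eq_two_iff.2 hind, hind⟩
  refine .inr (le_antisymm ?_ (Nat.one_le_iff_ne_zero.2 fun h0 => ht ?_))
  · have := finrank_range_le_card (R := K) (b := ![Bᵀ 0, Bᵀ 1])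
    have := mt finrank_span_pair_eq_two_iff.1 hind
    simp only [Fintype.card_fin] at *
    omega
  · rw [Set.finrank, Submodule.finrank_eq_zero] at h0
    have hmem : ∀ j : Fin 2, ![Bᵀ 0, Bᵀ 1] j = 0 := fun j =>
      (mem_bot K).1 (h0 ▸ subset_span (Set.mem_range_self j))
    exact ⟨congrFun (hmem 0) t, congrFun (hmem 1) t⟩

theorem card_affineSolutions_eq_one {B : Matrix ι (Fin 3) K} (hrank : B.rank = 2)
    (hind : LinearIndependent K ![Bᵀ 0, Bᵀ 1]) :
    (affineSolutions B).card = 1 := by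
  have hspan : span K (Set.range ![Bᵀ 0, Bᵀ 1]) = span K (Set.range B.col) := by
    refine Submodule.eq_of_le_of_finrank_eq (span_mono ?_) ?_
    · rintro _ ⟨j, rfl⟩
      fin_cases j
      exacts [⟨0, rfl⟩, ⟨1, rfl⟩]
    · rw [← rank_eq_finrank_span_cols, hrank]
      exact finrank_span_pair_eq_two_iff.2 hind
  obtain ⟨c, hc⟩ : ∃ c : Fin 2 → K, ∑ i, c i • ![Bᵀ 0, Bᵀ 1] i = Bᵀ 2 :=
    mem_span_range_iff_exists_fun K |>.1 (hspan ▸ subset_span ⟨2, rfl⟩)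
  have hex : (-c 0, -c 1) ∈ affineSolutions B := by
    rw [mem_affineSolutions_iff, ← hc]
    simp only [Fin.sum_univ_two, Matrix.cons_val_zero, Matrix.cons_val_one, neg_smul]
    abel
  have huniq : ∀ w ∈ affineSolutions B, ∀ w' ∈ affineSolutions B, w = w' := by
    intro w hw w' hw'
    rw [mem_affineSolutions_iff] at hw hw'
    have hdiff : (w.1 - w'.1) • Bᵀ 0 + (w.2 - w'.2) • Bᵀ 1 = 0 := by
      rw [sub_smul, sub_smul, ← sub_eq_zero.2 (hw.trans hw'.symm)]
      abel
    obtain ⟨h1, h2⟩ := LinearIndependent.pair_iff.1 hind _ _ hdiff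
    exact Prod.ext (sub_eq_zero.1 h1) (sub_eq_zero.1 h2)
  exact le_antisymm (Finset.card_le_one.2 huniq) (Finset.card_pos.2 ⟨_, hex⟩)

open Classical in
theorem card_affineSolutions_le {B : Matrix ι (Fin 3) K} {t : ι}
    (ht : ¬(B t 0 = 0 ∧ B t 1 = 0)) :
    (affineSolutions B).card ≤
      (if B.rank = 2 ∧ LinearIndependent K ![Bᵀ 0, Bᵀ 1] then 1 else 0)
        + if B.rank = 1 then Fintype.card K else 0 := by
  obtain h | ⟨w, hw⟩ := (affineSolutions B).eq_empty_or_nonempty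
  · simp [h]
  obtain h2 | h1 := rank_eq_two_or_eq_one_of_mem_affineSolutions hw ht
  · rw [card_affineSolutions_eq_one h2.1 h2.2, if_pos h2]
    exact Nat.le_add_right 1 _
  · rw [if_pos h1]
    exact (card_affineSolutions_le_card ht).trans (Nat.le_add_left _ _)

end AffineSolutions

theorem MvPolynomial.sq_dvd_eval_add_smul_sub_s18 {σ R : Type*} [CommRing R] [Fintype σ]
    (f : MvPolynomial σ R) (x u : σ → R) (N : R) :
    N ^ 2 ∣ eval (x + N • u) f - eval x f - N * ∑ i, u i * eval x (pderiv i f) := by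
  classical
  induction f using MvPolynomial.induction_on with
  | C c => simp
  | add p q hp hq =>
    obtain ⟨r, hr⟩ := hp
    obtain ⟨s, hs⟩ := hq
    refine ⟨r + s, ?_⟩
    simp only [map_add, mul_add, Finset.sum_add_distrib]
    linear_combination hr + hs
  | mul_X p j hp =>
    obtain ⟨r, hr⟩ := hp
    have hsum : ∑ i, u i * eval x (pderiv i (p * X j))
        = (∑ i, u i * eval x (pderiv i p)) * x j + u j * eval x p := by
      simp only [Derivation.leibniz, pderiv_X, smul_eq_mul, map_add, map_mul, mul_add,
        Finset.sum_add_distrib, Finset.sum_mul, Pi.single_apply]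
      simp [mul_comm, mul_left_comm, add_comm]
    rw [hsum]
    refine ⟨r * (x j + N * u j) + u j * ∑ i, u i * eval x (pderiv i p), ?_⟩
    simp only [map_mul, eval_X, Pi.add_apply, Pi.smul_apply, smul_eq_mul]
    linear_combination (x j + N * u j) * hr

section Lifting

open MvPolynomial

variable (f : MvPolynomial (Fin 2) ℤ)

theorem sq_dvd_eval_lift_sub (p x y k l : ℤ) :
    p ^ 2 ∣ eval ![k * p + x, l * p + y] f - eval ![x, y] f
      - p * (k * eval ![x, y] (pderiv 0 f) + l * eval ![x, y] (pderiv 1 f)) := by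
  have hpt : ![x, y] + p • ![k, l] = ![k * p + x, l * p + y] := by
    ext i
    fin_cases i <;> simp [mul_comm, add_comm]
  have := sq_dvd_eval_add_smul_sub_s18 f ![x, y] ![k, l] p
  rw [hpt] at this
  simpa [Fin.sum_univ_two] using this

theorem dvd_eval_of_sq_dvd_eval_lift {p x y k l : ℤ}
    (h : p ^ 2 ∣ eval ![k * p + x, l * p + y] f) : p ∣ eval ![x, y] f := by
  obtain ⟨r, hr⟩ := sq_dvd_eval_lift_sub f p x y k l
  obtain ⟨s, hs⟩ := h
  exact ⟨p * (s - r) - k * eval ![x, y] (pderiv 0 f) - l * eval ![x, y] (pderiv 1 f),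
    by linear_combination hs - hr⟩

theorem sq_dvd_eval_lift_iff {p : ℕ} (hp : p.Prime) {x y : ℤ}
    (hxy : (p : ℤ) ∣ eval ![x, y] f) (k l : ℤ) :
    (p : ℤ) ^ 2 ∣ eval ![k * p + x, l * p + y] f ↔
      (k : ZMod p) * (eval ![x, y] (pderiv 0 f) : ZMod p)
        + (l : ZMod p) * (eval ![x, y] (pderiv 1 f) : ZMod p)
        + ((eval ![x, y] f / p : ℤ) : ZMod p) = 0 := by
  obtain ⟨m, hm⟩ := hxy
  obtain ⟨r, hr⟩ := sq_dvd_eval_lift_sub f p x y k l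
  have hp0 : (p : ℤ) ≠ 0 := Int.natCast_ne_zero.2 hp.ne_zero
  have hlift : eval ![k * p + x, l * p + y] f
      = p * (k * eval ![x, y] (pderiv 0 f) + l * eval ![x, y] (pderiv 1 f) + m + p * r) := by
    linear_combination hr + hm
  rw [hlift, hm, Int.mul_ediv_cancel_left _ hp0, sq, mul_dvd_mul_iff_left hp0,
    dvd_add_left (dvd_mul_right _ _), ← ZMod.intCast_zmod_eq_zero_iff_dvd]
  push_cast
  rfl

theorem forall_sq_dvd_eval_lift_iff_mem_affineSolutions {p i : ℕ} [Fact p.Prime]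
    {P : Fin i → ℕ × ℕ} (hP : ∀ t, P t ∈ curvePts f p) (kl : ℕ × ℕ) :
    (∀ t, (p : ℤ) ^ 2 ∣ eval ![(kl.1 : ℤ) * p + (P t).1, (kl.2 : ℤ) * p + (P t).2] f) ↔
      ((kl.1 : ZMod p), (kl.2 : ZMod p)) ∈ affineSolutions (Bmat f p i P) := by
  simp only [affineSolutions, Finset.mem_filter, Finset.mem_univ, true_and, _root_.funext_iff,
    Pi.zero_apply]
  refine forall_congr' fun t => ?_
  rw [sq_dvd_eval_lift_iff f Fact.out (Finset.mem_filter.1 (hP t)).2]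
  simp [Bmat, mulVec, dotProduct, Fin.sum_univ_three, mul_comm]

end Lifting

section Counting

open MvPolynomial

variable (f : MvPolynomial (Fin 2) ℤ) (p : ℕ)

theorem descFactorial_Xrv (i : ℕ) (kl : ℕ × ℕ) :
    (Xrv f p kl).descFactorial i = ((tuples f p i).filter fun P => ∀ t,
      (p : ℤ) ^ 2 ∣ eval ![(kl.1 : ℤ) * p + (P t).1, (kl.2 : ℤ) * p + (P t).2] f).card := by
  rw [Xrv, Finset.descFactorial_card_eq_card_filter_injective]
  congr 1
  ext P
  simp only [tuples, curvePts, Finset.mem_filter, Fintype.mem_piFinset]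
  constructor
  · rintro ⟨hP, hinj⟩
    exact ⟨⟨fun t => ⟨(hP t).1, dvd_eval_of_sq_dvd_eval_lift f (hP t).2⟩, hinj⟩,
      fun t => (hP t).2⟩
  · rintro ⟨⟨hP, hinj⟩, hlift⟩
    exact ⟨fun t => ⟨(hP t).1, hlift t⟩, hinj⟩

variable [Fact p.Prime]

theorem card_lifts_eq_card_affineSolutions {i : ℕ} {P : Fin i → ℕ × ℕ}
    (hP : P ∈ tuples f p i) :
    ((Finset.range p ×ˢ Finset.range p).filter fun kl : ℕ × ℕ => ∀ t,
      (p : ℤ) ^ 2 ∣ eval ![(kl.1 : ℤ) * p + (P t).1, (kl.2 : ℤ) * p + (P t).2] f).card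
      = (affineSolutions (Bmat f p i P)).card := by
  have hcurve := Fintype.mem_piFinset.1 (Finset.mem_filter.1 hP).1
  refine Finset.card_nbij' (fun kl => ((kl.1 : ZMod p), (kl.2 : ZMod p)))
    (fun w => (w.1.val, w.2.val)) ?_ ?_ ?_ ?_
  · intro kl hkl
    exact (forall_sq_dvd_eval_lift_iff_mem_affineSolutions f hcurve kl).1
      (Finset.mem_filter.1 hkl).2
  · intro w hw
    refine Finset.mem_filter.2 ⟨Finset.mem_product.2 ⟨Finset.mem_range.2 (ZMod.val_lt _),
      Finset.mem_range.2 (ZMod.val_lt _)⟩, ?_⟩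
    refine (forall_sq_dvd_eval_lift_iff_mem_affineSolutions f hcurve _).2 ?_
    simpa using hw
  · intro kl hkl
    obtain ⟨hk, hl⟩ := Finset.mem_product.1 (Finset.mem_filter.1 hkl).1
    exact Prod.ext (ZMod.val_cast_of_lt (Finset.mem_range.1 hk))
      (ZMod.val_cast_of_lt (Finset.mem_range.1 hl))
  · intro w _
    simp

theorem sum_descFactorial_Xrv (i : ℕ) :
    ∑ kl ∈ Finset.range p ×ˢ Finset.range p, (Xrv f p kl).descFactorial i
      = ∑ P ∈ tuples f p i, (affineSolutions (Bmat f p i P)).card := by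
  simp_rw [descFactorial_Xrv, Finset.card_filter]
  rw [Finset.sum_comm]
  refine Finset.sum_congr rfl fun P hP => ?_
  rw [← Finset.card_filter, card_lifts_eq_card_affineSolutions f p hP]

end Counting

section Moments

open MvPolynomial

variable {f : MvPolynomial (Fin 2) ℤ}

noncomputable def factorialMoment (f : MvPolynomial (Fin 2) ℤ) (p i : ℕ) : ℝ :=
  (∑ kl ∈ Finset.range p ×ˢ Finset.range p, ((Xrv f p kl).descFactorial i : ℝ)) /
    (p : ℝ) ^ 2

theorem eventually_prime_primesFilter : ∀ᶠ p in primesFilter, p.Prime :=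
  eventually_inf_principal.2 (.of_forall fun _ => id)

def GradNonvanishing (f : MvPolynomial (Fin 2) ℤ) (p : ℕ) : Prop :=
  ∀ xy ∈ curvePts f p,
    ¬ ((p : ℤ) ∣ eval ![(xy.1 : ℤ), (xy.2 : ℤ)] (pderiv 0 f) ∧
       (p : ℤ) ∣ eval ![(xy.1 : ℤ), (xy.2 : ℤ)] (pderiv 1 f))

theorem GradNonvanishing.bmat_row_ne_zero {p i : ℕ} (hgrad : GradNonvanishing f p)
    {P : Fin i → ℕ × ℕ} (hP : P ∈ tuples f p i) (t : Fin i) :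
    ¬(Bmat f p i P t 0 = 0 ∧ Bmat f p i P t 1 = 0) := fun ⟨h0, h1⟩ =>
  hgrad (P t) (Fintype.mem_piFinset.1 (Finset.mem_filter.1 hP).1 t)
    ⟨(ZMod.intCast_zmod_eq_zero_iff_dvd _ p).1 h0, (ZMod.intCast_zmod_eq_zero_iff_dvd _ p).1 h1⟩

section

variable {p : ℕ} [Fact p.Prime]

theorem GradNonvanishing.sum_card_affineSolutions_one (hgrad : GradNonvanishing f p) :
    ∑ P ∈ tuples f p 1, (affineSolutions (Bmat f p 1 P)).card = (curvePts f p).card * p := by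
  have htuples : (tuples f p 1).card = (curvePts f p).card := by
    rw [tuples, Finset.filter_true_of_mem fun P _ => Function.injective_of_subsingleton P,
      Fintype.card_piFinset, Finset.prod_const, Finset.card_univ, Fintype.card_fin, pow_one]
  rw [Finset.sum_congr rfl fun P hP =>
      card_affineSolutions_of_subsingleton (hgrad.bmat_row_ne_zero hP 0),
    Finset.sum_const, smul_eq_mul, htuples, ZMod.card]

theorem mk2_le_sum_card_affineSolutions (i : ℕ) :
    mk2 f p i ≤ ∑ P ∈ tuples f p i, (affineSolutions (Bmat f p i P)).card := by
  classical
  rw [mk2, Finset.card_filter]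
  refine Finset.sum_le_sum fun P _ => ?_
  split_ifs with h
  · exact (card_affineSolutions_eq_one h.1 h.2).ge
  · exact Nat.zero_le _

theorem GradNonvanishing.sum_card_affineSolutions_le (hgrad : GradNonvanishing f p) {i : ℕ}
    (hi : 1 ≤ i) :
    ∑ P ∈ tuples f p i, (affineSolutions (Bmat f p i P)).card
      ≤ mk2 f p i + mk1 f p i * p := by
  classical
  rw [mk2, mk1, Finset.card_filter, Finset.card_filter, Finset.sum_mul, ← Finset.sum_add_distrib]
  refine Finset.sum_le_sum fun P hP => ?_
  refine (card_affineSolutions_le (hgrad.bmat_row_ne_zero hP ⟨0, hi⟩)).trans_eq ?_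
  rw [ZMod.card, ite_zero_mul, one_mul]

end

theorem tendsto_factorialMoment_one (hgrad : ∀ᶠ p in primesFilter, GradNonvanishing f p)
    (hm : Tendsto (fun p : ℕ => ((curvePts f p).card : ℝ) / p) primesFilter (nhds 1)) :
    Tendsto (factorialMoment f · 1) primesFilter (nhds 1) := by
  refine hm.congr' ?_
  filter_upwards [eventually_prime_primesFilter, hgrad] with p hp hg
  have := Fact.mk hp
  rw [factorialMoment, ← Nat.cast_sum, sum_descFactorial_Xrv, hg.sum_card_affineSolutions_one]
  have : (p : ℝ) ≠ 0 := Nat.cast_ne_zero.2 hp.ne_zero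
  field_simp
  push_cast
  ring

theorem tendsto_factorialMoment_of_one_le (hgrad : ∀ᶠ p in primesFilter, GradNonvanishing f p)
    {i : ℕ} (hi : 1 ≤ i)
    (hmk2 : Tendsto (fun p : ℕ => (mk2 f p i : ℝ) / (p : ℝ) ^ 2) primesFilter (nhds 1))
    (hmk1 : Tendsto (fun p : ℕ => (mk1 f p i : ℝ) / p) primesFilter (nhds 0)) :
    Tendsto (factorialMoment f · i) primesFilter (nhds 1) := by
  have hupper := hmk2.add hmk1
  rw [add_zero] at hupper
  refine tendsto_of_tendsto_of_tendsto_of_le_of_le' hmk2 hupper ?_ ?_ <;>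
    filter_upwards [eventually_prime_primesFilter, hgrad] with p hp hg <;>
    have := Fact.mk hp <;>
    rw [factorialMoment, ← Nat.cast_sum, sum_descFactorial_Xrv]
  · gcongr
    exact_mod_cast mk2_le_sum_card_affineSolutions i
  · have : (p : ℝ) ≠ 0 := Nat.cast_ne_zero.2 hp.ne_zero
    calc _ ≤ ((mk2 f p i + mk1 f p i * p : ℕ) : ℝ) / (p : ℝ) ^ 2 := by
          gcongr
          exact_mod_cast hg.sum_card_affineSolutions_le hi
      _ = _ := by
          field_simp
          push_cast
          ring

theorem sum_pow_Xrv_div_eq_sum_stirling2_mul_factorialMoment (f : MvPolynomial (Fin 2) ℤ)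
    (p : ℕ) {k : ℕ} (hk : k ≠ 0) :
    (∑ kl ∈ Finset.range p ×ˢ Finset.range p, (Xrv f p kl : ℝ) ^ k) / (p : ℝ) ^ 2
      = ∑ i ∈ Finset.Icc 1 k, (stirling2 k i : ℝ) * factorialMoment f p i := by
  simp_rw [factorialMoment, mul_div_assoc', ← Finset.sum_div, Finset.mul_sum]
  rw [Finset.sum_comm]
  congr 1
  refine Finset.sum_congr rfl fun kl _ => ?_
  rw [stirling2_eq_stirlingSecond]
  exact_mod_cast Nat.pow_eq_sum_Icc_stirlingSecond_mul_descFactorial hk _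

end Moments

theorem stmt_18 (f : MvPolynomial (Fin 2) ℤ)
    (hgrad : ∀ᶠ p in primesFilter, ∀ xy ∈ curvePts f p,
      ¬ ((p : ℤ) ∣ MvPolynomial.eval ![(xy.1 : ℤ), (xy.2 : ℤ)] (MvPolynomial.pderiv 0 f) ∧
         (p : ℤ) ∣ MvPolynomial.eval ![(xy.1 : ℤ), (xy.2 : ℤ)] (MvPolynomial.pderiv 1 f)))
    (hm : Tendsto (fun p : ℕ => ((curvePts f p).card : ℝ) / p) primesFilter (nhds 1))
    (hmk2 : ∀ k : ℕ, 2 ≤ k →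
      Tendsto (fun p : ℕ => (mk2 f p k : ℝ) / (p : ℝ) ^ 2) primesFilter (nhds 1))
    (hmk1 : ∀ k : ℕ, 2 ≤ k →
      Tendsto (fun p : ℕ => (mk1 f p k : ℝ) / p) primesFilter (nhds 0)) :
    ∀ k : ℕ, 1 ≤ k →
      Tendsto (fun p : ℕ =>
          (∑ kl ∈ Finset.range p ×ˢ Finset.range p, (Xrv f p kl : ℝ) ^ k) / (p : ℝ) ^ 2)
        primesFilter
        (nhds (∑ i ∈ Finset.Icc 1 k, (stirling2 k i : ℝ))) := by
  intro k hk
  have hfactorial :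
      ∀ i ∈ Finset.Icc 1 k, Tendsto (factorialMoment f · i) primesFilter (nhds 1) := by
    intro i hi
    obtain rfl | h2 := (Finset.mem_Icc.1 hi).1.eq_or_lt
    · exact tendsto_factorialMoment_one hgrad hm
    · exact tendsto_factorialMoment_of_one_le hgrad h2.le (hmk2 i h2) (hmk1 i h2)
  simp_rw [sum_pow_Xrv_div_eq_sum_stirling2_mul_factorialMoment f _ (Nat.pos_iff_ne_zero.1 hk)]
  simpa using tendsto_finsetSum _ fun i hi => (hfactorial i hi).const_mul (stirling2 k i : ℝ)
end
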